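/- arXiv:2002.12281 — 3 statements merged into one kernel-verified Lean document; each statement's English description precedes it below -/
import Mathlib

section
/- Let φ be a matter density and let b ≥ 0. If θ₁ and θ₂ are smooth, everywhere positive functions on ℝ³ satisfying θᵢ(x)·Δθᵢ(x) = −4πκ·φ(x) for all x ∈ ℝ³ and θᵢ(x) → b as |x| → ∞ (i = 1,2), and both θ₁ and θ₂ satisfy the decay conditions at level b, then θ₁ = θ₂. -/
open MeasureTheory Filter Metric Set

noncomputable section

abbrev E3 : Type := EuclideanSpace ℝ (Fin 3)

/-- The Euclidean Laplacian on `ℝ³`. -/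
def lap (u : E3 → ℝ) (x : E3) : ℝ :=
  ∑ i : Fin 3, fderiv ℝ (fun y => fderiv ℝ u y (EuclideanSpace.single i 1)) x
    (EuclideanSpace.single i 1)

/-- `u` satisfies the decay conditions at level `b`: for every (order of a) multi-index `k`
there is a constant `C` such that `|∂^l (u - b)| ≤ C · |x| ^ (-1 - k)` for all large `|x|`. -/
def DecayAt (b : ℝ) (u : E3 → ℝ) : Prop :=
  ∀ k : ℕ, ∃ C R : ℝ, ∀ x : E3, R ≤ ‖x‖ →
    ‖iteratedFDeriv ℝ k (fun y => u y - b) x‖ ≤ C * ‖x‖ ^ (-1 - (k : ℝ))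

/-- A matter density: smooth, compactly supported, nonnegative, not identically zero. -/
def IsMatterDensity (φ : E3 → ℝ) : Prop :=
  ContDiff ℝ (⊤ : ℕ∞) φ ∧ HasCompactSupport φ ∧ (∀ x, 0 ≤ φ x) ∧ φ ≠ 0

/-!
With `w = θ₁ - θ₂`, the two equations give
`w Δw = 4πκ φ w² / (θ₁ θ₂) ≥ 0`, so `div (w ∇w) = |∇w|² + w Δw ≥ 0`.
By the divergence theorem, the integral of this density over the cube `[-R, R]³` is the flux of
`w ∇w` through its boundary, which the decay conditions bound by `O(R² · R⁻³) = O(1/R)`.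
Letting `R → ∞`, the density vanishes identically, hence `∇w = 0`; so `w` is constant, and it is
`0` because `θ₁` and `θ₂` have the same limit at infinity.
-/

theorem sub_mul_sub_nonneg_of_mul_eq_neg {a b p q s : ℝ} (ha : 0 < a) (hb : 0 < b) (hs : 0 ≤ s)
    (hp : a * p = -s) (hq : b * q = -s) : 0 ≤ (a - b) * (p - q) := by
  obtain rfl : p = -s / a := by rw [eq_div_iff ha.ne']; linarith
  obtain rfl : q = -s / b := by rw [eq_div_iff hb.ne']; linarith
  have key : (a - b) * (-s / a - -s / b) = s * (a - b) ^ 2 / (a * b) := by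
    field_simp
    ring
  rw [key]
  positivity

theorem contDiff_fderiv_apply {E F : Type*} [NormedAddCommGroup E] [NormedSpace ℝ E]
    [NormedAddCommGroup F] [NormedSpace ℝ F] {n : WithTop ℕ∞} {W : E → F}
    (hW : ContDiff ℝ (n + 1) W) (v : E) :
    ContDiff ℝ n fun x => fderiv ℝ W x v :=
  (hW.fderiv_right le_rfl).clm_apply contDiff_const

theorem eq_zero_of_fderiv_eq_zero_of_tendsto {E : Type*} [NormedAddCommGroup E] [NormedSpace ℝ E]
    [Nontrivial E] {w : E → ℝ} (hw : Differentiable ℝ w) (hfd : ∀ x, fderiv ℝ w x = 0)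
    (hlim : Tendsto w (cocompact E) (nhds 0)) : w = 0 := by
  ext x
  have hconst : w = fun _ => w x := funext fun y => is_const_of_fderiv_eq_zero hw hfd y x
  rw [hconst] at hlim
  exact tendsto_nhds_unique tendsto_const_nhds hlim

theorem eq_zero_of_tendsto_setIntegral {X : Type*} [TopologicalSpace X] [MeasurableSpace X]
    [OpensMeasurableSpace X] {μ : Measure X} [μ.IsOpenPosMeasure] {P : X → ℝ}
    (hP : Continuous P) (hP0 : 0 ≤ P) {S : ℕ → Set X} (hS : Monotone S)
    (hSm : ∀ n, MeasurableSet (S n)) (hcover : ⋃ n, S n = univ)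
    (hint : ∀ n, IntegrableOn P (S n) μ)
    (hlim : Tendsto (fun n => ∫ x in S n, P x ∂μ) atTop (nhds 0)) : P = 0 := by
  have hmono : Monotone fun n => ∫ x in S n, P x ∂μ := fun m n hmn =>
    setIntegral_mono_set (hint n) (ae_of_all _ hP0) (hS hmn).eventuallyLE
  have hzero : ∀ n, P =ᵐ[μ.restrict (S n)] 0 := fun n =>
    (setIntegral_eq_zero_iff_of_nonneg_ae (ae_of_all _ hP0) (hint n)).1
      (le_antisymm (hmono.ge_of_tendsto hlim n) (setIntegral_nonneg (hSm n) fun x _ => hP0 x))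
  have hae : P =ᵐ[μ] 0 := by
    rw [← Measure.restrict_univ (μ := μ), ← hcover]
    exact (ae_restrict_iUnion_iff _ _).2 hzero
  exact (hP.ae_eq_iff_eq μ continuous_zero).1 hae

theorem abs_setIntegral_Icc_le {n : ℕ} {h : (Fin n → ℝ) → ℝ} {R M : ℝ} (hR : 0 ≤ R)
    (hM : ∀ x, |h x| ≤ M) :
    |∫ x in Icc (fun _ => -R) (fun _ => R), h x| ≤ (2 * R) ^ n * M := by
  have hvol : volume.real (Icc (fun _ : Fin n => -R) (fun _ => R)) = (2 * R) ^ n := by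
    rw [measureReal_def, Real.volume_Icc_pi_toReal (fun _ => by linarith)]
    simp only [Finset.prod_const, Finset.card_univ, Fintype.card_fin]
    ring
  have := norm_setIntegral_le_of_norm_le_const (μ := volume) (f := h)
    (isCompact_Icc (a := fun _ : Fin n => -R) (b := fun _ => R)).measure_lt_top
    fun x _ => (Real.norm_eq_abs (h x)).trans_le (hM x)
  rw [hvol] at this
  simpa [mul_comm] using this

theorem integral_divergence_Icc_le {n : ℕ} {f : Fin (n + 1) → (Fin (n + 1) → ℝ) → ℝ}
    {f' : Fin (n + 1) → (Fin (n + 1) → ℝ) → (Fin (n + 1) → ℝ) →L[ℝ] ℝ}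
    (hf : ∀ i x, HasFDerivAt (f i) (f' i x) x)
    (hdiv : Continuous fun x => ∑ i, f' i x (Pi.single i 1))
    {R M : ℝ} (hR : 0 ≤ R) (hM : ∀ i x, |x i| = R → |f i x| ≤ M) :
    ∫ x in Icc (fun _ => -R) (fun _ => R), ∑ i, f' i x (Pi.single i 1)
      ≤ (n + 1) * (2 * ((2 * R) ^ n * M)) := by
  have hface : ∀ i c, |c| = R →
      |∫ x in Icc (fun _ => -R) (fun _ => R), f i (i.insertNth c x)| ≤ (2 * R) ^ n * M :=
    fun i c hc => abs_setIntegral_Icc_le hR fun x => hM i _ (by simpa using hc)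
  rw [integral_divergence_of_hasFDerivAt_off_countable' _ _ (fun _ => by linarith) f f' ∅
    countable_empty (fun i x _ => (hf i x).continuousAt.continuousWithinAt)
    (fun x _ i => hf i x) (hdiv.integrableOn_Icc)]
  calc _ ≤ ∑ _i : Fin (n + 1), 2 * ((2 * R) ^ n * M) := by
        gcongr with i
        have h₁ := hface i R (abs_of_nonneg hR)
        have h₂ := hface i (-R) (by rw [abs_neg, abs_of_nonneg hR])
        rw [abs_le] at h₁ h₂
        dsimp only [Function.comp_def]
        linarith [h₁.2, h₂.1]
    _ = _ := by simp

theorem lap_sub {u v : E3 → ℝ} (hu : ContDiff ℝ 2 u) (hv : ContDiff ℝ 2 v) (x : E3) :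
    lap (fun y => u y - v y) x = lap u x - lap v x := by
  have hd : ∀ {W : E3 → ℝ}, ContDiff ℝ 2 W → Differentiable ℝ W := fun hW =>
    hW.differentiable (by norm_num)
  have hpartial : ∀ i : Fin 3,
      (fun y => fderiv ℝ (fun z => u z - v z) y (EuclideanSpace.single i 1)) =
        fun y => fderiv ℝ u y (EuclideanSpace.single i 1) -
          fderiv ℝ v y (EuclideanSpace.single i 1) := by
    intro i; ext y
    rw [fderiv_fun_sub (hd hu y) (hd hv y), sub_apply]
  simp only [lap, hpartial, ← Finset.sum_sub_distrib]
  refine Finset.sum_congr rfl fun i _ => ?_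
  rw [fderiv_fun_sub ((contDiff_fderiv_apply hu _).differentiable one_ne_zero x)
    ((contDiff_fderiv_apply hv _).differentiable one_ne_zero x), sub_apply]

/-- `div (W ∇W) = |∇W|² + W ΔW`. -/
def divMulGrad (W : E3 → ℝ) (x : E3) : ℝ :=
  ∑ i : Fin 3, fderiv ℝ W x (EuclideanSpace.single i 1) ^ 2 + W x * lap W x

theorem continuous_divMulGrad {W : E3 → ℝ} (hW : ContDiff ℝ 2 W) :
    Continuous (divMulGrad W) := by
  have h1 : ∀ i : Fin 3, ContDiff ℝ 1 fun x => fderiv ℝ W x (EuclideanSpace.single i 1) :=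
    fun i => contDiff_fderiv_apply hW _
  refine (continuous_finsetSum _ fun i _ => (h1 i).continuous.pow 2).add
    (hW.continuous.mul (continuous_finsetSum _ fun i _ => ?_))
  exact (contDiff_fderiv_apply (n := 0) (by simpa using h1 i) _).continuous

theorem fderiv_eq_zero_of_divMulGrad_eq_zero {W : E3 → ℝ} {x : E3} (h : divMulGrad W x = 0)
    (hsign : 0 ≤ W x * lap W x) : fderiv ℝ W x = 0 := by
  have hsq : ∀ i ∈ Finset.univ, fderiv ℝ W x (EuclideanSpace.single i 1) ^ 2 = 0 := by
    refine (Finset.sum_eq_zero_iff_of_nonneg fun i _ => sq_nonneg _).1 ?_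
    have := Finset.sum_nonneg fun i (_ : i ∈ Finset.univ) =>
      sq_nonneg (fderiv ℝ W x (EuclideanSpace.single i 1))
    rw [divMulGrad] at h
    linarith
  refine ContinuousLinearMap.coe_injective <|
    (EuclideanSpace.basisFun (Fin 3) ℝ).toBasis.ext fun i => ?_
  simpa using hsq i (Finset.mem_univ i)

theorem integral_divMulGrad_le {W : E3 → ℝ} (hW : ContDiff ℝ 2 W) {R M : ℝ} (hR : 0 ≤ R)
    (hM : ∀ y, R ≤ ‖y‖ → |W y| * ‖fderiv ℝ W y‖ ≤ M) :
    ∫ x in Icc (fun _ => -R) (fun _ => R), divMulGrad W (WithLp.toLp 2 x) ≤ 24 * R ^ 2 * M := by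
  -- The divergence theorem lives on `Fin 3 → ℝ`; `T` transports the field `W ∇W` there.
  set T : (Fin 3 → ℝ) →L[ℝ] E3 := (EuclideanSpace.equiv (Fin 3) ℝ).symm.toContinuousLinearMap
  have hTe : ∀ i, T (Pi.single i 1) = EuclideanSpace.single i 1 := fun _ => rfl
  set g : Fin 3 → E3 → ℝ := fun i y => fderiv ℝ W y (EuclideanSpace.single i 1)
  have hg : ∀ i, ContDiff ℝ 1 (g i) := fun i => contDiff_fderiv_apply hW _
  have hWd : Differentiable ℝ W := hW.differentiable (by norm_num)
  have hf : ∀ i x, HasFDerivAt (fun x => W (T x) * g i (T x))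
      (W (T x) • (fderiv ℝ (g i) (T x)).comp T + g i (T x) • (fderiv ℝ W (T x)).comp T) x :=
    fun i x => ((hWd _).hasFDerivAt.comp x T.hasFDerivAt).mul
      (((hg i).differentiable one_ne_zero _).hasFDerivAt.comp x T.hasFDerivAt)
  have hdiv : ∀ x, ∑ i, (W (T x) • (fderiv ℝ (g i) (T x)).comp T +
      g i (T x) • (fderiv ℝ W (T x)).comp T) (Pi.single i 1) = divMulGrad W (T x) := by
    intro x
    rw [divMulGrad, lap, Finset.mul_sum, ← Finset.sum_add_distrib]
    refine Finset.sum_congr rfl fun i _ => ?_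
    simp [hTe, g]
    ring
  calc _ = ∫ x in Icc (fun _ => -R) (fun _ => R), ∑ i : Fin 3,
        (W (T x) • (fderiv ℝ (g i) (T x)).comp T + g i (T x) • (fderiv ℝ W (T x)).comp T)
          (Pi.single i 1) := setIntegral_congr_fun measurableSet_Icc fun x _ => (hdiv x).symm
    _ ≤ (2 + 1) * (2 * ((2 * R) ^ 2 * M)) :=
        integral_divergence_Icc_le hf
          (((continuous_divMulGrad hW).comp T.continuous).congr fun x => (hdiv x).symm) hR
          fun i x hx => ?_
    _ = 24 * R ^ 2 * M := by ring
  have hx' : R ≤ ‖T x‖ := hx ▸ PiLp.norm_apply_le (T x) i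
  calc |W (T x) * g i (T x)| ≤ |W (T x)| * ‖fderiv ℝ W (T x)‖ := by
        rw [abs_mul]
        gcongr
        simpa using (fderiv ℝ W (T x)).le_opNorm (EuclideanSpace.single i 1)
    _ ≤ M := hM _ hx'

theorem DecayAt.sub {b : ℝ} {u v : E3 → ℝ} (hub : DecayAt b u) (hvb : DecayAt b v)
    (hu : ContDiff ℝ (⊤ : ℕ∞) u) (hv : ContDiff ℝ (⊤ : ℕ∞) v) :
    DecayAt 0 fun x => u x - v x := by
  intro k
  obtain ⟨C₁, R₁, h₁⟩ := hub k
  obtain ⟨C₂, R₂, h₂⟩ := hvb k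
  refine ⟨C₁ + C₂, max R₁ R₂, fun x hx => ?_⟩
  have hsplit : (fun y => u y - v y - 0) = (fun y => u y - b) - fun y => v y - b := by
    ext y; simp
  have hk : ((k : ℕ∞) : WithTop ℕ∞) ≤ (⊤ : ℕ∞) := WithTop.coe_le_coe.2 le_top
  rw [hsplit, iteratedFDeriv_sub_apply ((hu.sub contDiff_const).of_le hk).contDiffAt
    ((hv.sub contDiff_const).of_le hk).contDiffAt, add_mul]
  exact (norm_sub_le _ _).trans
    (add_le_add (h₁ x (le_of_max_le_left hx)) (h₂ x (le_of_max_le_right hx)))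

theorem DecayAt.exists_abs_mul_norm_fderiv_le {w : E3 → ℝ} (hw : DecayAt 0 w) :
    ∃ A R₀ : ℝ, 0 ≤ A ∧ 0 < R₀ ∧ ∀ y, R₀ ≤ ‖y‖ → |w y| * ‖fderiv ℝ w y‖ ≤ A / ‖y‖ ^ 3 := by
  obtain ⟨C₀, R₁, h₀⟩ := hw 0
  obtain ⟨C₁, R₂, h₁⟩ := hw 1
  refine ⟨|C₀| * |C₁|, max 1 (max R₁ R₂), by positivity, by positivity, fun y hy => ?_⟩
  have hy0 : 0 < ‖y‖ := zero_lt_one.trans_le (le_of_max_le_left hy)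
  have hw0 : |w y| ≤ |C₀| / ‖y‖ := by
    have := (h₀ y (le_of_max_le_left (le_of_max_le_right hy))).trans
      (mul_le_mul_of_nonneg_right (le_abs_self C₀) (by positivity))
    norm_num [Real.rpow_neg_one] at this
    exact this
  have hw1 : ‖fderiv ℝ w y‖ ≤ |C₁| / ‖y‖ ^ 2 := by
    have := (h₁ y (le_of_max_le_right (le_of_max_le_right hy))).trans
      (mul_le_mul_of_nonneg_right (le_abs_self C₁) (by positivity))
    norm_num at this
    exact this
  calc |w y| * ‖fderiv ℝ w y‖ ≤ |C₀| / ‖y‖ * (|C₁| / ‖y‖ ^ 2) :=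
        mul_le_mul hw0 hw1 (norm_nonneg _) ((abs_nonneg _).trans hw0)
    _ = |C₀| * |C₁| / ‖y‖ ^ 3 := by ring

theorem divMulGrad_eq_zero_of_decay {W : E3 → ℝ} (hW : ContDiff ℝ 2 W)
    (hnonneg : 0 ≤ divMulGrad W) {A R₀ : ℝ} (hA : 0 ≤ A) (hR₀ : 0 < R₀)
    (hdecay : ∀ y, R₀ ≤ ‖y‖ → |W y| * ‖fderiv ℝ W y‖ ≤ A / ‖y‖ ^ 3) : divMulGrad W = 0 := by
  set P : (Fin 3 → ℝ) → ℝ := fun x => divMulGrad W (WithLp.toLp 2 x)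
  set S : ℕ → Set (Fin 3 → ℝ) := fun n => Icc (fun _ => -(n : ℝ)) (fun _ => n)
  have hP : Continuous P := (continuous_divMulGrad hW).comp (PiLp.continuous_toLp 2 _)
  have hbound : ∀ n : ℕ, R₀ ≤ n → ∫ x in S n, P x ≤ 24 * A / n := by
    intro n hn
    have hn0 : (0 : ℝ) < n := hR₀.trans_le hn
    calc _ ≤ 24 * (n : ℝ) ^ 2 * (A / n ^ 3) := integral_divMulGrad_le hW hn0.le fun y hy =>
            (hdecay y (hn.trans hy)).trans (by gcongr)
      _ = 24 * A / n := by field_simp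
  have hlim : Tendsto (fun n => ∫ x in S n, P x) atTop (nhds 0) := by
    refine tendsto_of_tendsto_of_tendsto_of_le_of_le' tendsto_const_nhds
      (tendsto_const_div_atTop_nhds_zero_nat (24 * A))
      (Eventually.of_forall fun n => setIntegral_nonneg measurableSet_Icc fun x _ => hnonneg _) ?_
    filter_upwards [eventually_ge_atTop ⌈R₀⌉₊] with n hn using hbound n (Nat.ceil_le.1 hn)
  have hS : Monotone S := fun m n hmn => Icc_subset_Icc (fun _ => by simpa using hmn)
    (fun _ => by simpa using hmn)
  have hcover : ⋃ n, S n = univ := by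
    refine eq_univ_of_forall fun x => mem_iUnion.2 ⟨⌈‖x‖⌉₊, fun i => ?_, fun i => ?_⟩ <;>
    linarith [abs_le.1 ((norm_le_pi_norm x i).trans (Nat.le_ceil ‖x‖))]
  have hP0 := eq_zero_of_tendsto_setIntegral hP (fun x => hnonneg _) hS
    (fun n => measurableSet_Icc) hcover (fun n => hP.integrableOn_Icc) hlim
  ext y
  simpa using congrFun hP0 (WithLp.ofLp y)

theorem rpp_uniqueness_general (κ : ℝ) (hκ : 0 < κ) (φ : E3 → ℝ) (hφ : IsMatterDensity φ)
    (b : ℝ) (θ₁ θ₂ : E3 → ℝ)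
    (h₁sm : ContDiff ℝ (⊤ : ℕ∞) θ₁) (h₁pos : ∀ x, 0 < θ₁ x)
    (h₁eq : ∀ x, θ₁ x * lap θ₁ x = -(4 * Real.pi * κ) * φ x)
    (h₁lim : Tendsto θ₁ (cocompact E3) (nhds b)) (h₁dec : DecayAt b θ₁)
    (h₂sm : ContDiff ℝ (⊤ : ℕ∞) θ₂) (h₂pos : ∀ x, 0 < θ₂ x)
    (h₂eq : ∀ x, θ₂ x * lap θ₂ x = -(4 * Real.pi * κ) * φ x)
    (h₂lim : Tendsto θ₂ (cocompact E3) (nhds b)) (h₂dec : DecayAt b θ₂) :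
    θ₁ = θ₂ := by
  have h₁ : ContDiff ℝ 2 θ₁ := h₁sm.of_le (by norm_cast)
  have h₂ : ContDiff ℝ 2 θ₂ := h₂sm.of_le (by norm_cast)
  set w := fun x => θ₁ x - θ₂ x
  have hw : ContDiff ℝ 2 w := h₁.sub h₂
  have hsign : ∀ x, 0 ≤ w x * lap w x := fun x => by
    rw [lap_sub h₁ h₂]
    exact sub_mul_sub_nonneg_of_mul_eq_neg (h₁pos x) (h₂pos x)
      (mul_nonneg (by positivity) (hφ.2.2.1 x)) ((h₁eq x).trans (neg_mul _ _))
      ((h₂eq x).trans (neg_mul _ _))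
  have hnonneg : 0 ≤ divMulGrad w := fun x =>
    add_nonneg (Finset.sum_nonneg fun i _ => sq_nonneg _) (hsign x)
  obtain ⟨A, R₀, hA, hR₀, hdecay⟩ := (h₁dec.sub h₂dec h₁sm h₂sm).exists_abs_mul_norm_fderiv_le
  have hzero := divMulGrad_eq_zero_of_decay hw hnonneg hA hR₀ hdecay
  have hw0 : w = 0 := eq_zero_of_fderiv_eq_zero_of_tendsto (hw.differentiable (by norm_num))
    (fun x => fderiv_eq_zero_of_divMulGrad_eq_zero (congrFun hzero x) (hsign x))
    (by simpa using h₁lim.sub h₂lim)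
  ext x
  exact sub_eq_zero.1 (congrFun hw0 x)

theorem rpp_uniqueness (κ : ℝ) (hκ : 0 < κ) (φ : E3 → ℝ) (hφ : IsMatterDensity φ)
    (b : ℝ) (hb : 0 ≤ b) (θ₁ θ₂ : E3 → ℝ)
    (h₁sm : ContDiff ℝ (⊤ : ℕ∞) θ₁) (h₁pos : ∀ x, 0 < θ₁ x)
    (h₁eq : ∀ x, θ₁ x * lap θ₁ x = -(4 * Real.pi * κ) * φ x)
    (h₁lim : Tendsto θ₁ (cocompact E3) (nhds b)) (h₁dec : DecayAt b θ₁)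
    (h₂sm : ContDiff ℝ (⊤ : ℕ∞) θ₂) (h₂pos : ∀ x, 0 < θ₂ x)
    (h₂eq : ∀ x, θ₂ x * lap θ₂ x = -(4 * Real.pi * κ) * φ x)
    (h₂lim : Tendsto θ₂ (cocompact E3) (nhds b)) (h₂dec : DecayAt b θ₂) :
    θ₁ = θ₂ :=
  rpp_uniqueness_general κ hκ φ hφ b θ₁ θ₂ h₁sm h₁pos h₁eq h₁lim h₁dec h₂sm h₂pos h₂eq h₂lim h₂dec
end
end

section
/- Let φ be a matter density such that κ·∫_{ℝ³} φ(ξ)/|x−ξ| dξ ≥ 1 for every x in the support of φ. Suppose θ: ℝ³ → ℝ is smooth, everywhere positive, and satisfies the Green representation identity θ(x) = 1 + κ·∫_{ℝ³} φ(ξ)·θ(ξ)⁵/|x−ξ| dξ for all x ∈ ℝ³ (equivalently, θ solves Δθ = −4πκ·φ·θ⁵ with θ → 1 at infinity and the decay conditions at level 1). Then θ(x) ≥ 2^(5^n) for every n ∈ ℕ and every x in the support of φ; consequently no such solution θ exists. -/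
open MeasureTheory Filter Metric Set

noncomputable section

/-! Since the kernel is nonnegative, a lower bound `c ≥ 0` for `θ` on the support of `φ`
feeds back through the integral equation as `θ ≥ 1 + c⁵ · κ ∫ φ / |x - ξ| ≥ 1 + c⁵` there.
Starting from `c = 0` and iterating gives `θ ≥ 2 ^ 5 ^ n` on the support for every `n`,
which is impossible at any single point. Integrability of the right-hand side comes from the
largeness hypothesis (a non-integrable integral would vanish) and from the boundedness of the
continuous `θ` on the compact support. -/

theorem two_pow_pow_mem_lowerBounds {S : Set ℝ} {p : ℕ} (h0 : 0 ∈ lowerBounds S)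
    (hstep : ∀ c, 0 ≤ c → c ∈ lowerBounds S → 1 + c ^ p ∈ lowerBounds S) (n : ℕ) :
    (2 : ℝ) ^ p ^ n ∈ lowerBounds S := by
  have h1 : (1 : ℝ) ∈ lowerBounds S :=
    lowerBounds_mono_mem (le_add_of_nonneg_right (pow_nonneg le_rfl p)) (hstep 0 le_rfl h0)
  induction n with
  | zero => simpa [one_add_one_eq_two] using hstep 1 zero_le_one h1
  | succ n ih =>
    have h := hstep _ (by positivity) ih
    rw [← pow_mul, ← pow_succ] at h
    exact lowerBounds_mono_mem (le_add_of_nonneg_left zero_le_one) h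

namespace MeasureTheory

variable {α : Type*} [MeasurableSpace α] {μ : Measure α} {f g : α → ℝ}

theorem integrable_of_one_le_mul_integral {κ : ℝ} (h : 1 ≤ κ * ∫ a, f a ∂μ) :
    Integrable f μ :=
  Integrable.of_integral_ne_zero fun h0 => by rw [h0, mul_zero] at h; linarith

theorem Integrable.mul_of_norm_le_of_ne_zero {C : ℝ} (hf : Integrable f μ)
    (hg : AEStronglyMeasurable g μ) (hbound : ∀ a, f a ≠ 0 → ‖g a‖ ≤ C) :
    Integrable (fun a => g a * f a) μ := by
  refine (hf.norm.const_mul C).mono' (hg.mul hf.1) (Eventually.of_forall fun a => ?_)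
  by_cases ha : f a = 0
  · simp [ha]
  · rw [norm_mul]
    exact mul_le_mul_of_nonneg_right (hbound a ha) (norm_nonneg _)

theorem mul_integral_le_integral_mul {c : ℝ} (hf : Integrable f μ)
    (hgf : Integrable (fun a => g a * f a) μ) (hf0 : ∀ a, 0 ≤ f a)
    (hc : ∀ a, f a ≠ 0 → c ≤ g a) :
    c * ∫ a, f a ∂μ ≤ ∫ a, g a * f a ∂μ := by
  rw [← integral_const_mul]
  refine integral_mono (hf.const_mul c) hgf fun a => ?_
  by_cases ha : f a = 0
  · simp [ha]
  · exact mul_le_mul_of_nonneg_right (hc a ha) (hf0 a)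

end MeasureTheory

section IntegralEquation

variable {X : Type*} [MeasurableSpace X] {μ : Measure X} {s : Set X} {w : X → X → ℝ}
  {θ : X → ℝ} {κ : ℝ} {p : ℕ}

theorem one_add_pow_mem_lowerBounds_of_eq_one_add_integral (hκ : 0 ≤ κ)
    (hw : ∀ x ξ, 0 ≤ w x ξ) (hws : ∀ x ξ, w x ξ ≠ 0 → ξ ∈ s)
    (hbig : ∀ x ∈ s, 1 ≤ κ * ∫ ξ, w x ξ ∂μ) (hθ : AEStronglyMeasurable θ μ)
    (hθs : BddAbove (θ '' s)) (hθ0 : 0 ∈ lowerBounds (θ '' s))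
    (hrep : ∀ x ∈ s, θ x = 1 + κ * ∫ ξ, θ ξ ^ p * w x ξ ∂μ)
    {c : ℝ} (hc : 0 ≤ c) (hcθ : c ∈ lowerBounds (θ '' s)) :
    1 + c ^ p ∈ lowerBounds (θ '' s) := by
  rintro _ ⟨x, hx, rfl⟩
  obtain ⟨M, hM⟩ := hθs
  have hθ0' : ∀ ξ, w x ξ ≠ 0 → 0 ≤ θ ξ := fun ξ hξ => hθ0 (mem_image_of_mem θ (hws x ξ hξ))
  have hwx : Integrable (w x) μ := integrable_of_one_le_mul_integral (hbig x hx)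
  have hint : Integrable (fun ξ => θ ξ ^ p * w x ξ) μ :=
    hwx.mul_of_norm_le_of_ne_zero (C := M ^ p) (hθ.pow p) fun ξ hξ => by
      rw [Real.norm_of_nonneg (pow_nonneg (hθ0' ξ hξ) p)]
      exact pow_le_pow_left₀ (hθ0' ξ hξ) (hM (mem_image_of_mem θ (hws x ξ hξ))) p
  have hmono : c ^ p * ∫ ξ, w x ξ ∂μ ≤ ∫ ξ, θ ξ ^ p * w x ξ ∂μ :=
    mul_integral_le_integral_mul hwx hint (hw x) fun ξ hξ =>
      pow_le_pow_left₀ hc (hcθ (mem_image_of_mem θ (hws x ξ hξ))) p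
  calc 1 + c ^ p ≤ 1 + c ^ p * (κ * ∫ ξ, w x ξ ∂μ) := by
        gcongr; exact le_mul_of_one_le_right (pow_nonneg hc p) (hbig x hx)
    _ = 1 + κ * (c ^ p * ∫ ξ, w x ξ ∂μ) := by ring
    _ ≤ 1 + κ * ∫ ξ, θ ξ ^ p * w x ξ ∂μ := by gcongr
    _ = θ x := (hrep x hx).symm

end IntegralEquation

theorem no_solution_for_large_density (κ : ℝ) (hκ : 0 < κ)
    (φ : E3 → ℝ) (hφ : IsMatterDensity φ)
    (hbig : ∀ x ∈ tsupport φ, 1 ≤ κ * ∫ ξ, φ ξ / ‖x - ξ‖)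
    (θ : E3 → ℝ) (hsm : ContDiff ℝ (⊤ : ℕ∞) θ) (hpos : ∀ x, 0 < θ x)
    (hrep : ∀ x, θ x = 1 + κ * ∫ ξ, φ ξ * θ ξ ^ 5 / ‖x - ξ‖) :
    (∀ n : ℕ, ∀ x ∈ tsupport φ, (2 : ℝ) ^ (5 ^ n) ≤ θ x) ∧ False := by
  obtain ⟨-, hφcs, hφ0, hφne⟩ := hφ
  have hbound (n : ℕ) : (2 : ℝ) ^ 5 ^ n ∈ lowerBounds (θ '' tsupport φ) :=
    two_pow_pow_mem_lowerBounds (by rintro _ ⟨x, -, rfl⟩; exact (hpos x).le)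
      (fun c hc hcθ => one_add_pow_mem_lowerBounds_of_eq_one_add_integral
        (w := fun x ξ => φ ξ / ‖x - ξ‖) hκ.le
        (fun x ξ => div_nonneg (hφ0 ξ) (norm_nonneg _))
        (fun x ξ h => subset_tsupport φ (left_ne_zero_of_mul h)) hbig
        hsm.continuous.aestronglyMeasurable
        (hφcs.isCompact.bddAbove_image hsm.continuous.continuousOn)
        (by rintro _ ⟨x, -, rfl⟩; exact (hpos x).le)
        (fun x _ => by simp only [hrep x, mul_div_assoc, mul_comm (φ _)]) hc hcθ) n
  have hsol (n : ℕ) (x : E3) (hx : x ∈ tsupport φ) : (2 : ℝ) ^ 5 ^ n ≤ θ x :=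
    hbound n (mem_image_of_mem θ hx)
  refine ⟨hsol, ?_⟩
  obtain ⟨x₀, hx₀⟩ := Function.ne_iff.mp hφne
  have hgrow : Tendsto (fun n : ℕ => (2 : ℝ) ^ 5 ^ n) atTop atTop :=
    (tendsto_pow_atTop_atTop_of_one_lt one_lt_two).comp
      (tendsto_pow_atTop_atTop_of_one_lt (by norm_num))
  obtain ⟨n, hn⟩ := (hgrow.eventually_gt_atTop (θ x₀)).exists
  exact (hn.trans_le (hsol n x₀ (subset_tsupport φ hx₀))).false
end
end

section
/- Let φ be a matter density, and for b ∈ (0,1] and α ∈ [0,1] let θ_{b,α} denote the unique smooth, everywhere positive solution of θ_{b,α}^α·Δθ_{b,α} = −4πκ·φ on ℝ³ with θ_{b,α}(x) → b as |x| → ∞ satisfying the decay conditions at level b. Then for all 0 < b < s ≤ 1, all α ∈ [0,1], and all x ∈ ℝ³, one has 0 ≤ θ_{s,α}(x) − θ_{b,α}(x) ≤ s − b. -/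
open MeasureTheory Filter Metric Set

noncomputable section

/-- `θ` solves the Generalized Poisson Problem with interactivity parameter `α` and
asymptotic boundary value `b`. -/
def IsGPPSolB (κ α b : ℝ) (φ θ : E3 → ℝ) : Prop :=
  ContDiff ℝ (⊤ : ℕ∞) θ ∧ (∀ x, 0 < θ x) ∧
    (∀ x, θ x ^ α * lap θ x = -(4 * Real.pi * κ) * φ x) ∧
    Tendsto θ (cocompact E3) (nhds b)

/-!
If `θ₁` and `θ₂` both solve `θ ^ α * Δθ = -4πκφ` with `φ ≥ 0`, then wherever `θ₁ ≥ θ₂` we get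
`Δθ₂ ≤ Δθ₁`, since the nonpositive right-hand side is divided by the smaller power `θ₂ ^ α`.
So `v = θ₁ - θ₂ - c` with `c ≥ 0` has `Δv ≥ 0` wherever `v > 0`. If moreover `v` tends to a
nonpositive limit at infinity, the weak maximum principle gives `v ≤ 0`: otherwise
`v + ε‖x‖²`, for small `ε`, has an interior local maximum at a point where `v > 0`, and there
its Laplacian `Δv + 6ε` would be positive. The pairs `(θ_b, θ_s)` with `c = 0` and
`(θ_s, θ_b)` with `c = s - b` give the two inequalities.
-/

open scoped Topology

theorem IsLocalMax.deriv_deriv_nonpos {f : ℝ → ℝ} {x₀ : ℝ} (h : IsLocalMax f x₀)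
    (hc : ContinuousAt f x₀) : deriv (deriv f) x₀ ≤ 0 := by
  -- If `f'' x₀ > 0`, then `x₀` is also a local minimum, so `f` is locally constant there.
  by_contra! hpos
  have hmin : IsLocalMin f x₀ := isLocalMin_of_deriv_deriv_pos hpos h.deriv_eq_zero hc
  have hconst : f =ᶠ[𝓝 x₀] fun _ => f x₀ := (hmin.and h).mono fun _ hx => le_antisymm hx.2 hx.1
  have hderiv : deriv f =ᶠ[𝓝 x₀] fun _ => 0 := hconst.deriv.trans (by simp)
  simp [hderiv.deriv_eq] at hpos

section

variable {E F : Type*} [NormedAddCommGroup E] [NormedSpace ℝ E]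
  [NormedAddCommGroup F] [NormedSpace ℝ F]

theorem hasDerivAt_comp_add_smul {f : E → F} {x v : E} {t : ℝ}
    (hf : DifferentiableAt ℝ f (x + t • v)) :
    HasDerivAt (fun s : ℝ => f (x + s • v)) (fderiv ℝ f (x + t • v) v) t := by
  simpa [Function.comp_def] using
    hf.hasFDerivAt.comp_hasDerivAt t (((hasDerivAt_id t).smul_const v).const_add x)

theorem ContDiff.differentiable_fderiv_apply {f : E → F} (hf : ContDiff ℝ 2 f) (v : E) :
    Differentiable ℝ fun y => fderiv ℝ f y v :=
  ((hf.fderiv_right (m := 1) le_rfl).clm_apply contDiff_const).differentiable one_ne_zero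

theorem IsLocalMax.fderiv_fderiv_apply_nonpos {f : E → ℝ} {x₀ : E} (h : IsLocalMax f x₀)
    (hf : ContDiff ℝ 2 f) (v : E) : fderiv ℝ (fun y => fderiv ℝ f y v) x₀ v ≤ 0 := by
  set g : ℝ → ℝ := fun t => f (x₀ + t • v)
  have hg : deriv g = fun t => fderiv ℝ f (x₀ + t • v) v :=
    funext fun t => (hasDerivAt_comp_add_smul (hf.differentiable two_ne_zero _)).deriv
  have hg' : deriv (deriv g) 0 = fderiv ℝ (fun y => fderiv ℝ f y v) x₀ v := by
    simpa [hg] using (hasDerivAt_comp_add_smul (t := 0)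
      (hf.differentiable_fderiv_apply v (x₀ + (0 : ℝ) • v))).deriv
  have hline : Continuous fun t : ℝ => x₀ + t • v := by fun_prop
  have hmax : IsLocalMax g 0 := by
    apply IsLocalMax.comp_continuous (g := fun t : ℝ => x₀ + t • v) (by simpa using h)
      hline.continuousAt
  exact hg' ▸ hmax.deriv_deriv_nonpos (hf.continuous.comp hline).continuousAt

end

section Laplacian

variable {f g : E3 → ℝ}

theorem lap_add (hf : ContDiff ℝ 2 f) (hg : ContDiff ℝ 2 g) (x : E3) :
    lap (f + g) x = lap f x + lap g x := by
  simp only [lap, ← Finset.sum_add_distrib]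
  refine Finset.sum_congr rfl fun i _ => ?_
  have hfg : (fun y => fderiv ℝ (f + g) y (EuclideanSpace.single i 1)) =
      (fun y => fderiv ℝ f y (EuclideanSpace.single i 1)) +
        fun y => fderiv ℝ g y (EuclideanSpace.single i 1) := by
    ext y
    simp [fderiv_add (hf.differentiable two_ne_zero y) (hg.differentiable two_ne_zero y)]
  rw [hfg, fderiv_add (hf.differentiable_fderiv_apply _ x) (hg.differentiable_fderiv_apply _ x)]
  rfl

theorem lap_neg (x : E3) : lap (-f) x = -lap f x := by
  simp [lap, fderiv_neg]

theorem lap_sub_s18 (hf : ContDiff ℝ 2 f) (hg : ContDiff ℝ 2 g) (x : E3) :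
    lap (f - g) x = lap f x - lap g x := by
  rw [sub_eq_add_neg, lap_add (g := -g) hf hg.neg, lap_neg, sub_eq_add_neg]

theorem lap_const (c : ℝ) (x : E3) : lap (fun _ => c) x = 0 := by
  simp [lap]

theorem lap_const_mul_norm_sq (c : ℝ) (x : E3) : lap (fun y => c * ‖y‖ ^ 2) x = 6 * c := by
  have hdir : ∀ v : E3, (fun y => fderiv ℝ (fun y : E3 => c * ‖y‖ ^ 2) y v) =
      (c • 2 • innerSL ℝ).flip v := by
    intro v; ext y
    simp [fderiv_const_mul ((contDiff_norm_sq ℝ (n := 1)).differentiable one_ne_zero y),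
      fderiv_norm_sq_apply]
  simp only [lap, hdir]
  rw [Fin.sum_univ_three, ContinuousLinearMap.fderiv, ContinuousLinearMap.fderiv,
    ContinuousLinearMap.fderiv]
  norm_num
  ring

end Laplacian

theorem IsLocalMax.lap_nonpos {f : E3 → ℝ} {x : E3} (h : IsLocalMax f x)
    (hf : ContDiff ℝ 2 f) : lap f x ≤ 0 :=
  Finset.sum_nonpos fun _ _ => h.fderiv_fderiv_apply_nonpos hf _

theorem exists_isLocalMax_mem_ball {α : Type*} [PseudoMetricSpace α] [ProperSpace α]
    {w : α → ℝ} {c p : α} {R : ℝ} (hw : ContinuousOn w (closedBall c R))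
    (hp : p ∈ closedBall c R) (hsphere : ∀ y ∈ sphere c R, w y < w p) :
    ∃ x₀ ∈ ball c R, IsLocalMax w x₀ ∧ w p ≤ w x₀ := by
  obtain ⟨x₀, hx₀, hmax⟩ := (isCompact_closedBall c R).exists_isMaxOn ⟨p, hp⟩ hw
  have hx₀ball : x₀ ∈ ball c R := by
    rw [← closedBall_sdiff_sphere]
    exact ⟨hx₀, fun hs => (hsphere x₀ hs).not_ge (hmax hp)⟩
  exact ⟨x₀, hx₀ball, hmax.isLocalMax (closedBall_mem_nhds_of_mem hx₀ball), hmax hp⟩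

theorem nonpos_of_tendsto_cocompact_of_lap_nonneg {v : E3 → ℝ} (hv : ContDiff ℝ 2 v) {L : ℝ}
    (hL : L ≤ 0) (hlim : Tendsto v (cocompact E3) (𝓝 L))
    (hsub : ∀ x, 0 < v x → 0 ≤ lap v x) (p : E3) : v p ≤ 0 := by
  by_contra! hp
  set m := v p
  obtain ⟨R₀, -, hR₀⟩ := hasBasis_cobounded_norm.eventually_iff.1 <|
    cobounded_eq_cocompact (α := E3) ▸
      hlim.eventually (eventually_lt_nhds (by linarith : L < m / 2))
  set R := max R₀ ‖p‖ + 1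
  have hR : 0 < R := by linarith [le_max_right R₀ ‖p‖, norm_nonneg p]
  set ε := m / (2 * R ^ 2)
  have hε : 0 < ε := by positivity
  have hεR : ε * R ^ 2 = m / 2 := by simp only [ε]; field_simp
  have hεp : 0 ≤ ε * ‖p‖ ^ 2 := by positivity
  have hbump : ContDiff ℝ 2 fun y : E3 => ε * ‖y‖ ^ 2 := contDiff_const.mul (contDiff_norm_sq ℝ)
  set w := v + fun y => ε * ‖y‖ ^ 2
  have hsphere : ∀ y ∈ sphere (0 : E3) R, w y < w p := by
    intro y hy
    rw [mem_sphere_zero_iff_norm] at hy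
    have hvy : v y < m / 2 := hR₀ (show R₀ ≤ ‖y‖ by linarith [le_max_left R₀ ‖p‖])
    simp only [w, Pi.add_apply, hy, hεR]
    linarith
  obtain ⟨x₀, hx₀, hmax, hpx₀⟩ := exists_isLocalMax_mem_ball (w := w)
    (hv.add hbump).continuous.continuousOn
    (mem_closedBall_zero_iff.2 (by linarith [le_max_right R₀ ‖p‖])) hsphere
  have hvx₀ : 0 < v x₀ := by
    have hx₀R : ε * ‖x₀‖ ^ 2 ≤ m / 2 := hεR ▸ by
      gcongr
      exact (mem_ball_zero_iff.1 hx₀).le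
    simp only [w, Pi.add_apply] at hpx₀
    linarith
  have hlap := hmax.lap_nonpos (hv.add hbump)
  rw [lap_add hv hbump, lap_const_mul_norm_sq] at hlap
  linarith [hsub x₀ hvx₀]

namespace IsGPPSolB

variable {κ α b b₁ b₂ : ℝ} {φ θ θ₁ θ₂ : E3 → ℝ}

theorem lap_eq (h : IsGPPSolB κ α b φ θ) (x : E3) :
    lap θ x = -(4 * Real.pi * κ * φ x) / θ x ^ α := by
  rw [eq_div_iff (Real.rpow_pos_of_pos (h.2.1 x) α).ne', mul_comm, h.2.2.1 x]
  ring

theorem lap_le_of_le (h₁ : IsGPPSolB κ α b₁ φ θ₁) (h₂ : IsGPPSolB κ α b₂ φ θ₂) (hκ : 0 ≤ κ)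
    (hα : 0 ≤ α) {x : E3} (hφ : 0 ≤ φ x) (hle : θ₂ x ≤ θ₁ x) : lap θ₂ x ≤ lap θ₁ x := by
  rw [h₁.lap_eq, h₂.lap_eq, neg_div, neg_div, neg_le_neg_iff]
  exact div_le_div_of_nonneg_left (by positivity) (Real.rpow_pos_of_pos (h₂.2.1 x) α)
    (Real.rpow_le_rpow (h₂.2.1 x).le hle hα)

theorem sub_le (h₁ : IsGPPSolB κ α b₁ φ θ₁) (h₂ : IsGPPSolB κ α b₂ φ θ₂) (hκ : 0 ≤ κ)
    (hα : 0 ≤ α) (hφ : ∀ x, 0 ≤ φ x) {c : ℝ} (hc : 0 ≤ c) (hbc : b₁ - b₂ ≤ c) (x : E3) :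
    θ₁ x - θ₂ x ≤ c := by
  have hθ₁ : ContDiff ℝ 2 θ₁ := h₁.1.of_le (WithTop.coe_le_coe.2 le_top)
  have hθ₂ : ContDiff ℝ 2 θ₂ := h₂.1.of_le (WithTop.coe_le_coe.2 le_top)
  set v : E3 → ℝ := θ₁ - θ₂ - fun _ => c with hv_def
  have hv : ContDiff ℝ 2 v := (hθ₁.sub hθ₂).sub contDiff_const
  have hsub : ∀ y, 0 < v y → 0 ≤ lap v y := by
    intro y hy
    simp only [hv_def, Pi.sub_apply] at hy
    rw [hv_def, lap_sub_s18 (f := θ₁ - θ₂) (hθ₁.sub hθ₂) contDiff_const, lap_sub_s18 hθ₁ hθ₂,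
      lap_const]
    linarith [h₁.lap_le_of_le h₂ hκ hα (hφ y) (by linarith : θ₂ y ≤ θ₁ y)]
  have hvx : v x ≤ 0 := nonpos_of_tendsto_cocompact_of_lap_nonneg hv
    (by linarith : b₁ - b₂ - c ≤ 0) ((h₁.2.2.2.sub h₂.2.2.2).sub tendsto_const_nhds) hsub x
  exact sub_nonpos.1 hvx

end IsGPPSolB

theorem gpp_monotonicity_in_b (κ : ℝ) (hκ : 0 < κ)
    (φ : E3 → ℝ) (hφ : IsMatterDensity φ) (θ : ℝ → ℝ → E3 → ℝ)
    (hθ : ∀ b ∈ Ioc (0 : ℝ) 1, ∀ α ∈ Icc (0 : ℝ) 1,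
      IsGPPSolB κ α b φ (θ b α) ∧ DecayAt b (θ b α)) :
    ∀ b s α : ℝ, 0 < b → b < s → s ≤ 1 → α ∈ Icc (0 : ℝ) 1 → ∀ x : E3,
      0 ≤ θ s α x - θ b α x ∧ θ s α x - θ b α x ≤ s - b := by
  intro b s α hb hbs hs hα x
  obtain ⟨hθb, -⟩ := hθ b ⟨hb, hbs.le.trans hs⟩ α hα
  obtain ⟨hθs, -⟩ := hθ s ⟨hb.trans hbs, hs⟩ α hα
  have hφ₀ : ∀ y, 0 ≤ φ y := hφ.2.2.1
  constructor
  · simpa using hθb.sub_le hθs hκ.le hα.1 hφ₀ le_rfl (by linarith) x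
  · exact hθs.sub_le hθb hκ.le hα.1 hφ₀ (by linarith) le_rfl x

end
end
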